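/- Fix d, n, L ≥ 1 and step sizes η^(1), …, η^(L) ∈ ℝ. There exist weights (W₀^(ℓ), W₁^(ℓ), P^(ℓ), Q^(ℓ))_{ℓ=1}^L of a 2L-layer bilinear Transformer with embedding dimension D = 2d+1 such that for all x_1, …, x_{n+1} ∈ ℝ^d and y_1, …, y_n ∈ ℝ, with prompt Z having i-th column ((1, x_i, 0_d), y_i) for i ≤ n and last column ((1, x_{n+1}, 0_d), 0), the layer outputs satisfy, for every ℓ ∈ {1, …, L}: Z^(2ℓ)[2d+2, n+1] = f(x_{n+1}; w^(ℓ)), where (w^(ℓ))_{ℓ=0}^L are the iterates of block-coordinate descent for quadratic regression with step sizes η^(ℓ), initialization w^(0) = 0, and blocks b_ℓ = {(0,0)} ∪ {(0,j) : 1 ≤ j ≤ d} ∪ {(min(j, r_ℓ), max(j, r_ℓ)) : 1 ≤ j ≤ d}, where r_ℓ ∈ {1, …, d} is the representative of ℓ modulo d. -/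

import Mathlib

open MeasureTheory ProbabilityTheory Matrix

noncomputable section

/-- The mask `M = diag(I_n, 0)`. -/
def attnMask (n : ℕ) : Matrix (Fin (n + 1)) (Fin (n + 1)) ℝ :=
  Matrix.diagonal fun i => if i = Fin.last n then 0 else 1

/-- A linear self-attention layer with weights `P, Q`. -/
def attn (D n : ℕ) (P Q : Matrix (Fin (D + 1)) (Fin (D + 1)) ℝ)
    (Z : Matrix (Fin (D + 1)) (Fin (n + 1)) ℝ) : Matrix (Fin (D + 1)) (Fin (n + 1)) ℝ :=
  Z + (n : ℝ)⁻¹ • (P * Z * attnMask n * (Zᵀ * Q * Z))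

/-- `diag(W, 0)`: places `W` in the top-left `D × D` block. -/
def diagEmbed (D : ℕ) (W : Matrix (Fin D) (Fin D) ℝ) : Matrix (Fin (D + 1)) (Fin (D + 1)) ℝ :=
  Matrix.of fun i j =>
    if hi : (i : ℕ) < D then
      (if hj : (j : ℕ) < D then W ⟨(i : ℕ), hi⟩ ⟨(j : ℕ), hj⟩ else 0)
    else 0

/-- The bilinear feed-forward layer `bilin(Z) = Z + (diag(W₀,0)Z) ⊙ (diag(W₁,0)Z)`. -/
def bilinLayer (D n : ℕ) (W0 W1 : Matrix (Fin D) (Fin D) ℝ)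
    (Z : Matrix (Fin (D + 1)) (Fin (n + 1)) ℝ) : Matrix (Fin (D + 1)) (Fin (n + 1)) ℝ :=
  Matrix.of fun i j => Z i j + (diagEmbed D W0 * Z) i j * (diagEmbed D W1 * Z) i j

/-- Forward pass of the `2L`-layer bilinear Transformer: `TFbilinFwd … Z ℓ = Z^{(2ℓ)}`,
obtained by alternating bilinear and attention layers with the `ℓ`-th block weights
`(W₀^{(ℓ)}, W₁^{(ℓ)}, P^{(ℓ)}, Q^{(ℓ)})`. -/
def TFbilinFwd (D n : ℕ) (W0 W1 : ℕ → Matrix (Fin D) (Fin D) ℝ)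
    (P Q : ℕ → Matrix (Fin (D + 1)) (Fin (D + 1)) ℝ)
    (Z : Matrix (Fin (D + 1)) (Fin (n + 1)) ℝ) : ℕ → Matrix (Fin (D + 1)) (Fin (n + 1)) ℝ
  | 0 => Z
  | ℓ + 1 => attn D n (P (ℓ + 1)) (Q (ℓ + 1))
      (bilinLayer D n (W0 (ℓ + 1)) (W1 (ℓ + 1)) (TFbilinFwd D n W0 W1 P Q Z ℓ))

/-- The prompt matrix: column `i ≤ n` is `((1, x_i, 0_d), y_i)`, last column
`((1, x_{n+1}, 0_d), 0)`. -/
def promptX (d D n : ℕ) (x : Fin (n + 1) → Fin d → ℝ) (y : Fin n → ℝ) :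
    Matrix (Fin (D + 1)) (Fin (n + 1)) ℝ :=
  Matrix.of fun i j =>
    if h0 : (i : ℕ) = 0 then 1
    else if h1 : (i : ℕ) ≤ d then x j ⟨(i : ℕ) - 1, by omega⟩
    else if (i : ℕ) = D then (if hj : (j : ℕ) < n then y ⟨(j : ℕ), hj⟩ else 0)
    else 0

/-- Index set of the pairs `0 ≤ i ≤ j ≤ d` indexing the quadratic regression
coefficients. -/
abbrev QIdx (d : ℕ) := { p : Fin (d + 1) × Fin (d + 1) // p.1 ≤ p.2 }

/-- Extended input `(1, x)`. -/
def xext (d : ℕ) (x : Fin d → ℝ) (i : Fin (d + 1)) : ℝ :=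
  if h : (i : ℕ) = 0 then 1 else x ⟨(i : ℕ) - 1, by have := i.isLt; omega⟩

/-- The quadratic regression features: `φ_{00}(x) = 1`, `φ_{0j}(x) = x[j]`,
`φ_{ij}(x) = x[i]·x[j]` for `1 ≤ i ≤ j ≤ d`. -/
def qphi (d : ℕ) (x : Fin d → ℝ) (p : QIdx d) : ℝ :=
  xext d x p.1.1 * xext d x p.1.2

/-- The quadratic regression loss `L(w) = (1/2n) Σᵢ (⟨w, φ(xᵢ)⟩ + yᵢ)²`. -/
def quadLoss (d n : ℕ) (x : Fin n → Fin d → ℝ) (y : Fin n → ℝ) (w : QIdx d → ℝ) : ℝ :=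
  (2 * (n : ℝ))⁻¹ * ∑ i : Fin n, ((∑ p : QIdx d, w p * qphi d (x i) p) + y i) ^ 2

/-- Block-coordinate descent iterates for an objective `F`, step sizes `η^{(ℓ)}` and
blocks `b_ℓ`, starting from `w^{(0)} = 0`: at step `ℓ` the coordinates in `b_ℓ` move
along the corresponding partial derivatives, all other coordinates stay. -/
def bcdIter {I : Type} [Fintype I] [DecidableEq I]
    (F : (I → ℝ) → ℝ) (η : ℕ → ℝ) (b : ℕ → Finset I) : ℕ → I → ℝ
  | 0 => 0
  | ℓ + 1 => fun p =>
      if p ∈ b (ℓ + 1) then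
        bcdIter F η b ℓ p - η (ℓ + 1) * fderiv ℝ F (bcdIter F η b ℓ) (Pi.single p 1)
      else bcdIter F η b ℓ p

/-- The `ℓ`-th coordinate block: with `r_ℓ = (ℓ-1) % d + 1` (the representative of `ℓ`
modulo `d` in `{1, …, d}`), it consists of `(0,0)`, the pairs `(0,j)` for `1 ≤ j ≤ d`,
and the pairs `(min(j,r_ℓ), max(j,r_ℓ))` for `1 ≤ j ≤ d`. -/
def blockQ (d : ℕ) (ℓ : ℕ) : Finset (QIdx d) :=
  Finset.univ.filter fun p =>
    (p.1.1 : ℕ) = 0 ∨ (p.1.1 : ℕ) = (ℓ - 1) % d + 1 ∨ (p.1.2 : ℕ) = (ℓ - 1) % d + 1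

/-!
After `ℓ` layer pairs the prompt has become the matrix whose column `k` is
`(1, x_k, x_k ⋅ x_k[r_ℓ], f(x_k; w^(ℓ)) + y_k)` (label `0` in the query column). The bilinear layer
moves the scratch rows from `x_k ⋅ x_k[r_{ℓ-1}]` to `x_k ⋅ x_k[r_ℓ]` by adding
`x_k ⋅ (x_k[r_ℓ] - x_k[r_{ℓ-1}])`. With `P = e_last e_lastᵀ` and `Q = -η diag(I, 0)` the attention
layer subtracts `(η/n) Σ_c (f(x_c; w) + y_c) ⟨z_c, z_k⟩` from the last row, where `z` is a column
without its last entry. Now `⟨z_c, z_k⟩ = Σ_{p ∈ b_ℓ} φ_p(x_c) φ_p(x_k)`, and this is exactly how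
much one coordinate-descent step on the block `b_ℓ` changes the prediction at `x_k`.
-/

lemma Fin.sum_univ_two_mul_add_one {M : Type*} [AddCommMonoid M] {d : ℕ}
    (f : Fin (2 * d + 1) → M) :
    ∑ i, f i = ∑ i : Fin (d + 1), f ⟨i, by omega⟩ + ∑ j : Fin d, f ⟨d + 1 + j, by omega⟩ := by
  have hcard : d + 1 + d = 2 * d + 1 := by omega
  rw [← Fintype.sum_equiv (finCongr hcard) (fun i => f (finCongr hcard i)) f (fun _ => rfl),
    Fin.sum_univ_add]
  rfl

section Layers

variable {D n : ℕ}

lemma diagEmbed_mul_apply_castSucc (W : Matrix (Fin D) (Fin D) ℝ)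
    (Z : Matrix (Fin (D + 1)) (Fin (n + 1)) ℝ) (i : Fin D) (k : Fin (n + 1)) :
    (diagEmbed D W * Z) i.castSucc k = ∑ j, W i j * Z j.castSucc k := by
  simp [Matrix.mul_apply, Fin.sum_univ_castSucc, diagEmbed]

lemma diagEmbed_mul_apply_last (W : Matrix (Fin D) (Fin D) ℝ)
    (Z : Matrix (Fin (D + 1)) (Fin (n + 1)) ℝ) (k : Fin (n + 1)) :
    (diagEmbed D W * Z) (Fin.last D) k = 0 := by
  simp [Matrix.mul_apply, diagEmbed]

lemma bilinLayer_apply_castSucc (W0 W1 : Matrix (Fin D) (Fin D) ℝ)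
    (Z : Matrix (Fin (D + 1)) (Fin (n + 1)) ℝ) (i : Fin D) (k : Fin (n + 1)) :
    bilinLayer D n W0 W1 Z i.castSucc k = Z i.castSucc k +
      (∑ j, W0 i j * Z j.castSucc k) * (∑ j, W1 i j * Z j.castSucc k) := by
  simp only [bilinLayer, Matrix.of_apply, diagEmbed_mul_apply_castSucc]

lemma bilinLayer_apply_last (W0 W1 : Matrix (Fin D) (Fin D) ℝ)
    (Z : Matrix (Fin (D + 1)) (Fin (n + 1)) ℝ) (k : Fin (n + 1)) :
    bilinLayer D n W0 W1 Z (Fin.last D) k = Z (Fin.last D) k := by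
  simp [bilinLayer, diagEmbed_mul_apply_last]

def readoutP (D : ℕ) : Matrix (Fin (D + 1)) (Fin (D + 1)) ℝ :=
  Matrix.single (Fin.last D) (Fin.last D) 1

def gramQ (D : ℕ) (e : ℝ) : Matrix (Fin (D + 1)) (Fin (D + 1)) ℝ :=
  Matrix.diagonal fun i => if i = Fin.last D then 0 else -e

lemma attn_readoutP_gramQ_apply_castSucc (e : ℝ) (Z : Matrix (Fin (D + 1)) (Fin (n + 1)) ℝ)
    (i : Fin D) (k : Fin (n + 1)) :
    attn D n (readoutP D) (gramQ D e) Z i.castSucc k = Z i.castSucc k := by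
  simp [attn, readoutP, Matrix.mul_assoc,
    Matrix.single_mul_apply_of_ne (h := Fin.castSucc_ne_last i)]

lemma transpose_mul_gramQ_mul_apply (e : ℝ) (Z : Matrix (Fin (D + 1)) (Fin (n + 1)) ℝ)
    (c k : Fin (n + 1)) :
    (Zᵀ * (gramQ D e * Z)) c k = -e * ∑ b : Fin D, Z b.castSucc c * Z b.castSucc k := by
  rw [Matrix.mul_apply, Fin.sum_univ_castSucc, Finset.mul_sum]
  simp only [gramQ, Matrix.diagonal_mul, Matrix.transpose_apply, if_pos, Fin.castSucc_ne_last,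
    if_false, zero_mul, mul_zero, add_zero]
  exact Finset.sum_congr rfl fun b _ => by ring

lemma attn_readoutP_gramQ_apply_last (e : ℝ) (Z : Matrix (Fin (D + 1)) (Fin (n + 1)) ℝ)
    (k : Fin (n + 1)) :
    attn D n (readoutP D) (gramQ D e) Z (Fin.last D) k = Z (Fin.last D) k -
      e * (n : ℝ)⁻¹ * ∑ c : Fin n, Z (Fin.last D) c.castSucc *
        ∑ b : Fin D, Z b.castSucc c.castSucc * Z b.castSucc k := by
  simp [attn, readoutP, Matrix.mul_assoc, Matrix.mul_apply (M := Z), attnMask,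
    Fin.sum_univ_castSucc, transpose_mul_gramQ_mul_apply, Finset.mul_sum]
  rw [← sub_eq_add_neg]
  exact congrArg _ (Finset.sum_congr rfl fun c _ => Finset.sum_congr rfl fun b _ => by ring)

end Layers

section QuadraticRegression

variable {d n : ℕ}

def qpred (d : ℕ) (w : QIdx d → ℝ) (v : Fin d → ℝ) : ℝ :=
  ∑ p, w p * qphi d v p

lemma hasFDerivAt_qpred (v : Fin d → ℝ) (w : QIdx d → ℝ) :
    HasFDerivAt (fun w => qpred d w v)
      (∑ p, qphi d v p • ContinuousLinearMap.proj (R := ℝ) (φ := fun _ : QIdx d => ℝ) p) w := by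
  simp only [qpred, mul_comm _ (qphi d v _)]
  exact HasFDerivAt.fun_sum fun p _ => (hasFDerivAt_apply p w).const_smul (qphi d v p)

lemma fderiv_quadLoss_single (x : Fin n → Fin d → ℝ) (y : Fin n → ℝ) (w : QIdx d → ℝ)
    (p : QIdx d) :
    fderiv ℝ (quadLoss d n x y) w (Pi.single p 1) =
      (n : ℝ)⁻¹ * ∑ i, (qpred d w (x i) + y i) * qphi d (x i) p := by
  have hsq (i : Fin n) := ((hasFDerivAt_qpred (x i) w).add_const (y i)).pow 2
  have hL := (HasFDerivAt.fun_sum (u := Finset.univ) fun i _ => hsq i).const_mul (2 * (n : ℝ))⁻¹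
  rw [show quadLoss d n x y = fun w => (2 * (n : ℝ))⁻¹ * ∑ i, (qpred d w (x i) + y i) ^ 2 from rfl,
    hL.fderiv]
  simp [Finset.mul_sum, Pi.single_apply]
  exact Finset.sum_congr rfl fun i _ => by ring

lemma qpred_bcdIter_quadLoss_succ (x : Fin n → Fin d → ℝ) (y : Fin n → ℝ) (η : ℕ → ℝ)
    (b : ℕ → Finset (QIdx d)) (ℓ : ℕ) (v : Fin d → ℝ) :
    qpred d (bcdIter (quadLoss d n x y) η b (ℓ + 1)) v =
      qpred d (bcdIter (quadLoss d n x y) η b ℓ) v - η (ℓ + 1) * (n : ℝ)⁻¹ *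
        ∑ i, (qpred d (bcdIter (quadLoss d n x y) η b ℓ) (x i) + y i) *
          ∑ p ∈ b (ℓ + 1), qphi d (x i) p * qphi d v p := by
  set w := bcdIter (quadLoss d n x y) η b ℓ
  have hstep (p : QIdx d) : bcdIter (quadLoss d n x y) η b (ℓ + 1) p * qphi d v p =
      w p * qphi d v p - if p ∈ b (ℓ + 1) then η (ℓ + 1) * (n : ℝ)⁻¹ *
        ∑ i, (qpred d w (x i) + y i) * (qphi d (x i) p * qphi d v p) else 0 := by
    simp only [bcdIter, fderiv_quadLoss_single, Finset.mul_sum]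
    split_ifs
    · rw [sub_mul, Finset.sum_mul]
      exact congrArg _ (Finset.sum_congr rfl fun i _ => by ring)
    · ring
  simp only [qpred, hstep, Finset.sum_sub_distrib, Finset.sum_ite_mem, Finset.univ_inter,
    ← Finset.mul_sum, Finset.sum_comm (s := b (ℓ + 1))]

@[simp]
lemma xext_zero (u : Fin d → ℝ) : xext d u 0 = 1 := by
  simp [xext]

@[simp]
lemma xext_succ (u : Fin d → ℝ) (j : Fin d) : xext d u j.succ = u j := by
  simp [xext]

def pairBlock (r : Fin (d + 1)) : Finset (QIdx d) :=
  Finset.univ.filter fun p => p.1.1 = 0 ∨ p.1.1 = r ∨ p.1.2 = r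

lemma sum_pairBlock {R : Type*} [CommSemiring R] (F : Fin (d + 1) → R) {r : Fin (d + 1)}
    (hr : r ≠ 0) :
    ∑ p ∈ pairBlock r, F p.1.1 * F p.1.2 = ∑ j, F 0 * F j + ∑ j : Fin d, F j.succ * F r := by
  rw [← Finset.sum_filter_add_sum_filter_not _ fun p : QIdx d => p.1.1 = 0]
  congr 1
  · refine Finset.sum_nbij' (fun p => p.1.2) (fun j => ⟨(0, j), Fin.zero_le _⟩) ?_ ?_ ?_ ?_ ?_
      <;> simp +contextual [pairBlock, Subtype.ext_iff, Prod.ext_iff]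
  · have hr' := Fin.pos_iff_ne_zero.2 hr
    -- the pairs with nonzero first entry are the `{j, r}` with `j ≠ 0`; `j = p.1 + p.2 - r`
    refine Finset.sum_bij' (fun p hp => ⟨p.1.1 + p.1.2 - r - 1, ?_⟩)
      (fun j _ => ⟨(min j.succ r, max j.succ r), min_le_max⟩) ?_ ?_ ?_ ?_ ?_
    all_goals
      simp only [pairBlock, Finset.mem_filter, Finset.mem_univ, true_and, Subtype.ext_iff,
        Prod.ext_iff, Fin.ext_iff, Fin.lt_def, Fin.coe_min, Fin.coe_max, Fin.val_zero,
        Fin.val_succ] at *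
    any_goals omega
    · simp
    · intro p hp
      have hle : (p.1.1 : ℕ) ≤ p.1.2 := p.2
      obtain ⟨h1, h2⟩ | ⟨h1, h2⟩ : (p.1.1 = r ∧ (p.1.2 : ℕ) = p.1.1 + p.1.2 - r - 1 + 1) ∨
          ((p.1.1 : ℕ) = p.1.1 + p.1.2 - r - 1 + 1 ∧ p.1.2 = r) := by
        simp only [Fin.ext_iff]; omega
      · exact (mul_comm _ _).trans (congrArg₂ (· * ·) (congrArg F (Fin.ext h2)) (congrArg F h1))
      · exact congrArg₂ (· * ·) (congrArg F (Fin.ext h1)) (congrArg F h2)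

lemma sum_pairBlock_qphi_mul_qphi {r : Fin (d + 1)} (hr : r ≠ 0) (u v : Fin d → ℝ) :
    ∑ p ∈ pairBlock r, qphi d u p * qphi d v p =
      ∑ i, xext d u i * xext d v i + ∑ j, (u j * xext d u r) * (v j * xext d v r) := by
  calc ∑ p ∈ pairBlock r, qphi d u p * qphi d v p
      = ∑ p ∈ pairBlock r, (xext d u p.1.1 * xext d v p.1.1) * (xext d u p.1.2 * xext d v p.1.2) :=
        Finset.sum_congr rfl fun p _ => by simp only [qphi]; ring
    _ = _ := by
        rw [sum_pairBlock (fun i => xext d u i * xext d v i) hr]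
        simp only [xext_zero, xext_succ, one_mul]
        exact congrArg _ (Finset.sum_congr rfl fun j _ => by ring)

end QuadraticRegression

section Construction

variable {d n : ℕ}

def featureRows (d n : ℕ) (x : Fin (n + 1) → Fin d → ℝ) (a : Fin (d + 1) → ℝ) :
    Matrix (Fin (2 * d + 1)) (Fin (n + 1)) ℝ :=
  Matrix.of fun i k =>
    if h : (i : ℕ) ≤ d then xext d (x k) ⟨i, by omega⟩
    else x k ⟨i - (d + 1), by omega⟩ * ∑ r, a r * xext d (x k) r

def tfState (d n : ℕ) (x : Fin (n + 1) → Fin d → ℝ) (y : Fin n → ℝ) (a : Fin (d + 1) → ℝ)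
    (w : QIdx d → ℝ) : Matrix (Fin (2 * d + 1 + 1)) (Fin (n + 1)) ℝ :=
  Matrix.of fun i k =>
    Fin.snoc (α := fun _ => ℝ) (fun b => featureRows d n x a b k)
      (qpred d w (x k) + Fin.snoc (α := fun _ => ℝ) y 0 k) i

variable (x : Fin (n + 1) → Fin d → ℝ) (y : Fin n → ℝ) (a : Fin (d + 1) → ℝ) (w : QIdx d → ℝ)

lemma featureRows_apply_xext (i : Fin (d + 1)) (k : Fin (n + 1)) :
    featureRows d n x a ⟨i, by omega⟩ k = xext d (x k) i := by
  simp [featureRows, Nat.le_of_lt_succ i.isLt]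

lemma featureRows_apply_scratch (j : Fin d) (k : Fin (n + 1)) :
    featureRows d n x a ⟨d + 1 + j, by omega⟩ k = x k j * ∑ r, a r * xext d (x k) r := by
  simp [featureRows, show ¬ d + 1 + (j : ℕ) ≤ d by omega]

lemma tfState_apply_castSucc (i : Fin (2 * d + 1)) (k : Fin (n + 1)) :
    tfState d n x y a w i.castSucc k = featureRows d n x a i k := by
  simp [tfState]

lemma tfState_apply_last (k : Fin (n + 1)) :
    tfState d n x y a w (Fin.last _) k = qpred d w (x k) + Fin.snoc (α := fun _ => ℝ) y 0 k := by
  simp [tfState]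

lemma tfState_zero_zero : tfState d n x y 0 0 = promptX d (2 * d + 1) n x y := by
  ext i k
  induction i using Fin.lastCases with
  | last =>
    induction k using Fin.lastCases <;> simp [tfState_apply_last, promptX, qpred] <;> omega
  | cast i =>
    rw [tfState_apply_castSucc]
    have hi : (i : ℕ) ≠ 2 * d + 1 := i.isLt.ne
    simp only [featureRows, promptX, xext, Matrix.of_apply, Fin.val_castSucc]
    split_ifs <;> first | rfl | omega | simp

lemma sum_featureRows_mul_featureRows (c k : Fin (n + 1)) :
    ∑ b, featureRows d n x a b c * featureRows d n x a b k =
      ∑ i, xext d (x c) i * xext d (x k) i +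
        ∑ j, (x c j * ∑ r, a r * xext d (x c) r) * (x k j * ∑ r, a r * xext d (x k) r) := by
  simp only [Fin.sum_univ_two_mul_add_one, featureRows_apply_xext, featureRows_apply_scratch]

def shiftW0 (d : ℕ) : Matrix (Fin (2 * d + 1)) (Fin (2 * d + 1)) ℝ :=
  Matrix.of fun i j => if d < (i : ℕ) ∧ (i : ℕ) = j + d then 1 else 0

def scratchW1 (d : ℕ) (b : Fin (d + 1) → ℝ) : Matrix (Fin (2 * d + 1)) (Fin (2 * d + 1)) ℝ :=
  Matrix.of fun i j => if h : d < (i : ℕ) ∧ (j : ℕ) ≤ d then b ⟨j, by omega⟩ else 0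

lemma sum_shiftW0_mul_featureRows_of_le {i : Fin (2 * d + 1)} (hi : (i : ℕ) ≤ d)
    (k : Fin (n + 1)) : ∑ j, shiftW0 d i j * featureRows d n x a j k = 0 :=
  Finset.sum_eq_zero fun j _ => by simp [shiftW0, hi.not_gt]

lemma sum_shiftW0_mul_featureRows_scratch (j : Fin d) (k : Fin (n + 1)) :
    ∑ l, shiftW0 d ⟨d + 1 + j, by omega⟩ l * featureRows d n x a l k = x k j := by
  rw [Finset.sum_eq_single ⟨j + 1, by omega⟩]
  · rw [shiftW0, Matrix.of_apply, if_pos ⟨by simp; omega, by simp; omega⟩, one_mul]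
    exact featureRows_apply_xext x a j.succ k
  · intro l _ hl
    simp only [shiftW0, Matrix.of_apply]
    rw [if_neg fun h => hl (Fin.ext (by simp at h ⊢; omega)), zero_mul]
  · simp

lemma sum_scratchW1_mul_featureRows_scratch (b : Fin (d + 1) → ℝ) (j : Fin d) (k : Fin (n + 1)) :
    ∑ l, scratchW1 d b ⟨d + 1 + j, by omega⟩ l * featureRows d n x a l k =
      ∑ r, b r * xext d (x k) r := by
  have hj : d < d + 1 + (j : ℕ) := by omega
  have hscratch (l : Fin d) : ¬ d + 1 + (l : ℕ) ≤ d := by omega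
  simp [Fin.sum_univ_two_mul_add_one, scratchW1, featureRows_apply_xext, Fin.is_le, hj, hscratch]

lemma bilinLayer_tfState (a' : Fin (d + 1) → ℝ) :
    bilinLayer (2 * d + 1) n (shiftW0 d) (scratchW1 d (a' - a)) (tfState d n x y a w) =
      tfState d n x y a' w := by
  ext i k
  induction i using Fin.lastCases with
  | last => simp only [bilinLayer_apply_last, tfState_apply_last]
  | cast i =>
    simp only [bilinLayer_apply_castSucc, tfState_apply_castSucc]
    by_cases hi : (i : ℕ) ≤ d
    · rw [sum_shiftW0_mul_featureRows_of_le x a hi, zero_mul, add_zero]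
      simp [featureRows, hi]
    · obtain ⟨j, hj⟩ : ∃ j : Fin d, i = ⟨d + 1 + j, by omega⟩ :=
        ⟨⟨i - (d + 1), by omega⟩, Fin.ext (by simp; omega)⟩
      rw [hj, sum_shiftW0_mul_featureRows_scratch, sum_scratchW1_mul_featureRows_scratch,
        featureRows_apply_scratch, featureRows_apply_scratch]
      simp only [Pi.sub_apply, sub_mul, Finset.sum_sub_distrib]
      ring

lemma attn_tfState {r : Fin (d + 1)} (hr : r ≠ 0) (e : ℝ) (w' : QIdx d → ℝ)
    (hw' : ∀ v, qpred d w' v = qpred d w v - e * (n : ℝ)⁻¹ *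
      ∑ c : Fin n, (qpred d w (x c.castSucc) + y c) *
        ∑ p ∈ pairBlock r, qphi d (x c.castSucc) p * qphi d v p) :
    attn (2 * d + 1) n (readoutP _) (gramQ _ e) (tfState d n x y (Pi.single r 1) w) =
      tfState d n x y (Pi.single r 1) w' := by
  ext i k
  induction i using Fin.lastCases with
  | last =>
    simp only [attn_readoutP_gramQ_apply_last, tfState_apply_last, tfState_apply_castSucc,
      sum_featureRows_mul_featureRows, hw', sum_pairBlock_qphi_mul_qphi hr]
    simp only [Pi.single_apply, ite_mul, one_mul, zero_mul, Finset.sum_ite_eq', Finset.mem_univ,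
      if_true, Fin.snoc_castSucc]
    ring
  | cast i => simp only [attn_readoutP_gramQ_apply_castSucc, tfState_apply_castSucc]

end Construction

section Pivot

variable {d : ℕ}

def blockPivot (d ℓ : ℕ) : Fin (d + 1) :=
  Fin.ofNat (d + 1) ((ℓ - 1) % d + 1)

lemma val_blockPivot (hd : 1 ≤ d) (ℓ : ℕ) : (blockPivot d ℓ : ℕ) = (ℓ - 1) % d + 1 := by
  have hlt := Nat.mod_lt (ℓ - 1) hd
  rw [blockPivot, Fin.val_ofNat, Nat.mod_eq_of_lt (by omega)]

lemma blockPivot_ne_zero (hd : 1 ≤ d) (ℓ : ℕ) : blockPivot d ℓ ≠ 0 := by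
  simp [Fin.ext_iff, val_blockPivot hd]

lemma blockQ_eq_pairBlock (hd : 1 ≤ d) (ℓ : ℕ) : blockQ d ℓ = pairBlock (blockPivot d ℓ) := by
  ext p
  simp only [blockQ, pairBlock, Finset.mem_filter, Fin.ext_iff, val_blockPivot hd, Fin.val_zero]

-- scratch rows hold `x[j] ⋅ ⟨a, (1, x)⟩`; this `a` makes them `x[j] ⋅ x[r_ℓ]`, and `0` in the prompt
def pivotCoeff (d ℓ : ℕ) : Fin (d + 1) → ℝ :=
  if ℓ = 0 then 0 else Pi.single (blockPivot d ℓ) 1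

end Pivot

lemma TFbilinFwd_eq_tfState {d n : ℕ} (hd : 1 ≤ d) (η : ℕ → ℝ) (x : Fin (n + 1) → Fin d → ℝ)
    (y : Fin n → ℝ) (ℓ : ℕ) :
    TFbilinFwd (2 * d + 1) n (fun _ => shiftW0 d)
        (fun t => scratchW1 d (pivotCoeff d t - pivotCoeff d (t - 1)))
        (fun _ => readoutP _) (fun t => gramQ _ (η t)) (promptX d (2 * d + 1) n x y) ℓ =
      tfState d n x y (pivotCoeff d ℓ)
        (bcdIter (quadLoss d n (fun i => x i.castSucc) y) η (blockQ d) ℓ) := by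
  induction ℓ with
  | zero => exact (tfState_zero_zero x y).symm
  | succ ℓ ih =>
    rw [TFbilinFwd, ih, Nat.add_sub_cancel, bilinLayer_tfState, pivotCoeff, if_neg ℓ.succ_ne_zero]
    refine attn_tfState x y _ (blockPivot_ne_zero hd _) _ _ fun v => ?_
    rw [qpred_bcdIter_quadLoss_succ, blockQ_eq_pairBlock hd]

theorem stmt16_general (d n L : ℕ) (hd : 1 ≤ d) (η : ℕ → ℝ) :
    ∃ (W0 W1 : ℕ → Matrix (Fin (2 * d + 1)) (Fin (2 * d + 1)) ℝ)
      (P Q : ℕ → Matrix (Fin (2 * d + 1 + 1)) (Fin (2 * d + 1 + 1)) ℝ),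
      ∀ (x : Fin (n + 1) → Fin d → ℝ) (y : Fin n → ℝ) (ℓ : ℕ), 1 ≤ ℓ → ℓ ≤ L →
        TFbilinFwd (2 * d + 1) n W0 W1 P Q (promptX d (2 * d + 1) n x y) ℓ
            (Fin.last (2 * d + 1)) (Fin.last n)
          = ∑ p : QIdx d,
              bcdIter (quadLoss d n (fun i => x i.castSucc) y) η (blockQ d) ℓ p *
                qphi d (x (Fin.last n)) p := by
  refine ⟨fun _ => shiftW0 d, fun t => scratchW1 d (pivotCoeff d t - pivotCoeff d (t - 1)),
    fun _ => readoutP _, fun t => gramQ _ (η t), fun x y ℓ _ _ => ?_⟩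
  rw [TFbilinFwd_eq_tfState hd η x y ℓ, tfState_apply_last, Fin.snoc_last, add_zero, qpred]

/-- with embedding dimension `D = 2d+1` there are weights of a `2L`-layer
bilinear Transformer whose prediction entry after `2ℓ` layers equals `f(x_{n+1}; w^{(ℓ)})`,
where `w^{(ℓ)}` are the block-coordinate descent iterates for the quadratic regression
loss with step sizes `η^{(ℓ)}` and blocks `b_ℓ` as above. -/
theorem stmt16 (d n L : ℕ) (hd : 1 ≤ d) (hn : 1 ≤ n) (hL : 1 ≤ L) (η : ℕ → ℝ) :
    ∃ (W0 W1 : ℕ → Matrix (Fin (2 * d + 1)) (Fin (2 * d + 1)) ℝ)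
      (P Q : ℕ → Matrix (Fin (2 * d + 1 + 1)) (Fin (2 * d + 1 + 1)) ℝ),
      ∀ (x : Fin (n + 1) → Fin d → ℝ) (y : Fin n → ℝ) (ℓ : ℕ), 1 ≤ ℓ → ℓ ≤ L →
        TFbilinFwd (2 * d + 1) n W0 W1 P Q (promptX d (2 * d + 1) n x y) ℓ
            (Fin.last (2 * d + 1)) (Fin.last n)
          = ∑ p : QIdx d,
              bcdIter (quadLoss d n (fun i => x i.castSucc) y) η (blockQ d) ℓ p *
                qphi d (x (Fin.last n)) p :=
  stmt16_general d n L hd η
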